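/- arXiv:2412.03066 — 7 statements merged into one kernel-verified Lean document; each statement's English description precedes it below -/
import Mathlib

section
/- If X is a mutual-visibility set of a graph G and x ∈ X, then X \ {x} is a mutual-visibility set of the vertex-deleted subgraph G − x. -/
open SimpleGraph

variable {V : Type*}

/-- Vertices `u` and `v` are `X`-visible in `G`: some shortest `u,v`-walk has
no internal vertex in `X`. -/
def XVisible (G : SimpleGraph V) (X : Set V) (u v : V) : Prop :=
  ∃ p : G.Walk u v, p.length = G.dist u v ∧
    ∀ w ∈ p.support, w ≠ u → w ≠ v → w ∉ X

/-- `X` is a mutual-visibility set of `G`. -/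
def MutualVis (G : SimpleGraph V) (X : Set V) : Prop :=
  ∀ ⦃u⦄, u ∈ X → ∀ ⦃v⦄, v ∈ X → XVisible G X u v

/-- `X` is a total mutual-visibility set of `G`. -/
def TotalVis (G : SimpleGraph V) (X : Set V) : Prop :=
  ∀ u v : V, XVisible G X u v

/-- `X` is a dual mutual-visibility set of `G`. -/
def DualVis (G : SimpleGraph V) (X : Set V) : Prop :=
  MutualVis G X ∧ ∀ ⦃u⦄, u ∉ X → ∀ ⦃v⦄, v ∉ X → XVisible G X u v

/-- `X` is an outer mutual-visibility set of `G`. -/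
def OuterVis (G : SimpleGraph V) (X : Set V) : Prop :=
  MutualVis G X ∧ ∀ ⦃u⦄, u ∈ X → ∀ ⦃v⦄, v ∉ X → XVisible G X u v

/-- `S` induces a convex subgraph of `G`. -/
def IsConvexSet (G : SimpleGraph V) (S : Set V) : Prop :=
  ∀ u ∈ S, ∀ v ∈ S, ∀ p : G.Walk u v, p.length = G.dist u v →
    ∀ w ∈ p.support, w ∈ S

/-- The cycle graph on `ZMod n`. -/
def cyc (n : ℕ) : SimpleGraph (ZMod n) :=
  SimpleGraph.fromRel (fun u v => u - v = 1)

/-!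
A shortest `u,v`-walk of `G` whose interior avoids `X` cannot pass through `x ∈ X`, so it lifts
to `G - x`; there it is still shortest, since distances in an induced subgraph are never smaller
than in `G`.
-/

namespace SimpleGraph

variable {W : Type*} {G : SimpleGraph V} {G' : SimpleGraph W} {s : Set V} {u v : V}

theorem Reachable.dist_map_le (f : G →g G') (h : G.Reachable u v) :
    G'.dist (f u) (f v) ≤ G.dist u v := by
  obtain ⟨p, hp⟩ := h.exists_walk_length_eq_dist
  calc G'.dist (f u) (f v) ≤ (p.map f).length := dist_le _
    _ = G.dist u v := by rw [Walk.length_map, hp]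

theorem Walk.length_induce (p : G.Walk u v) (hp : ∀ w ∈ p.support, w ∈ s) :
    (p.induce s hp).length = p.length := by
  conv_rhs => rw [← p.map_induce hp]
  exact (Walk.length_map _ _).symm

theorem Walk.length_induce_eq_dist (p : G.Walk u v) (hp : ∀ w ∈ p.support, w ∈ s)
    (hlen : p.length = G.dist u v) :
    (p.induce s hp).length =
      (G.induce s).dist ⟨u, hp _ p.start_mem_support⟩ ⟨v, hp _ p.end_mem_support⟩ := by
  refine le_antisymm ?_ (dist_le _)
  rw [p.length_induce hp, hlen]
  exact (p.induce s hp).reachable.dist_map_le (Embedding.induce s).toHom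

end SimpleGraph

theorem XVisible.mono {G : SimpleGraph V} {X Y : Set V} {u v : V} (h : XVisible G X u v)
    (hYX : Y ⊆ X) : XVisible G Y u v := by
  obtain ⟨p, hlen, hint⟩ := h
  exact ⟨p, hlen, fun w hw hwu hwv hwY => hint w hw hwu hwv (hYX hwY)⟩

theorem XVisible.induce {G : SimpleGraph V} {X s : Set V} {u v : V} (h : XVisible G X u v)
    (hsX : sᶜ ⊆ X) (hu : u ∈ s) (hv : v ∈ s) :
    XVisible (G.induce s) (Subtype.val ⁻¹' X) ⟨u, hu⟩ ⟨v, hv⟩ := by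
  obtain ⟨p, hlen, hint⟩ := h
  have hps : ∀ w ∈ p.support, w ∈ s := by
    intro w hw
    by_cases hwu : w = u
    · exact hwu ▸ hu
    by_cases hwv : w = v
    · exact hwv ▸ hv
    by_contra hws
    exact hint w hw hwu hwv (hsX hws)
  refine ⟨p.induce s hps, p.length_induce_eq_dist hps hlen, ?_⟩
  intro w hw hwu hwv
  rw [Walk.support_induce, List.mem_attachWith] at hw
  exact hint w hw (fun h => hwu (Subtype.ext h)) (fun h => hwv (Subtype.ext h))

theorem stmt_2 (G : SimpleGraph V) (X : Set V) (x : V)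
    (hX : MutualVis G X) (hx : x ∈ X) :
    MutualVis (G.induce ({x}ᶜ : Set V))
      (Subtype.val ⁻¹' (X \ {x}) : Set ({x}ᶜ : Set V)) := by
  intro u hu v hv
  have hsX : ({x}ᶜ : Set V)ᶜ ⊆ X := by rwa [compl_compl, Set.singleton_subset_iff]
  exact ((hX hu.1 hv.1).induce hsX u.2 v.2).mono (Set.preimage_mono Set.sdiff_subset)
end

section
/- Let G_n (n ≥ 2) be the graph obtained from n disjoint 5-cycles by selecting one edge in each and identifying these n edges into a single edge uv. Then the dual mutual-visibility number of G_n equals 2. -/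
open SimpleGraph

variable {V : Type*}

/-- The graph obtained from `n` disjoint 5-cycles, identifying one edge of
each into a single edge `uv`, where `u = Sum.inr 0`, `v = Sum.inr 1`, and the
`i`-th cycle is `u, (i,0), (i,1), (i,2), v`. -/
def Gn (n : ℕ) : SimpleGraph ((Fin n × Fin 3) ⊕ Fin 2) :=
  SimpleGraph.fromRel (fun a b =>
    (a = Sum.inr 0 ∧ b = Sum.inr 1) ∨
    (∃ i, a = Sum.inr 0 ∧ b = Sum.inl (i, 0)) ∨
    (∃ i, a = Sum.inl (i, 0) ∧ b = Sum.inl (i, 1)) ∨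
    (∃ i, a = Sum.inl (i, 1) ∧ b = Sum.inl (i, 2)) ∨
    (∃ i, a = Sum.inl (i, 2) ∧ b = Sum.inr 1))

/-!
For the lower bound, take two adjacent inner vertices `(i,0), (i,1)` of one cycle. Sending them
to `u` and `v` respectively and fixing everything else is a nonexpanding retraction of `Gn n` onto
the complement, so any geodesic between two outside vertices can be pushed off the set.

For the upper bound, the key observation is that when two vertices at distance two have a
unique common neighbour lying in `X`, exactly one of them lies in `X`. Propagating this along the
cycles shows that `u, v ∉ X` and that `X` meets each cycle in `∅`, `{(i,0), (i,1)}` or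
`{(i,1), (i,2)}`; the geodesics of length three and four between two different cycles then show
that at most one cycle meets `X`.
-/

section Visibility

variable {G : SimpleGraph V} {X : Set V} {a b : V}

theorem xVisible_refl (G : SimpleGraph V) (X : Set V) (a : V) : XVisible G X a a :=
  ⟨.nil, by simp, by simp⟩

theorem SimpleGraph.Adj.xVisible (h : G.Adj a b) : XVisible G X a b := by
  refine ⟨h.toWalk, by simp [dist_eq_one_iff_adj.2 h], fun w hw ha hb => ?_⟩
  simp only [Adj.toWalk, Walk.support_cons, Walk.support_nil, List.mem_cons,
    List.not_mem_nil, or_false] at hw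
  rcases hw with rfl | rfl <;> contradiction

theorem DualVis.xVisible_of_mem_iff (hX : DualVis G X) (h : a ∈ X ↔ b ∈ X) :
    XVisible G X a b := by
  by_cases ha : a ∈ X
  · exact hX.1 ha (h.1 ha)
  · exact hX.2 ha (mt h.2 ha)

theorem DualVis.mem_iff_notMem_of_not_xVisible (hX : DualVis G X) (h : ¬XVisible G X a b) :
    a ∈ X ↔ b ∉ X := by
  by_contra h'
  exact h (hX.xVisible_of_mem_iff (by tauto))

theorem not_xVisible_of_forall_getVert_mem
    (h : ∀ p : G.Walk a b, p.length = G.dist a b →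
      ∃ k, 0 < k ∧ k < p.length ∧ p.getVert k ∈ X) :
    ¬XVisible G X a b := by
  rintro ⟨p, hp, hX⟩
  obtain ⟨k, hk0, hk, hkX⟩ := h p hp
  have hinj := (p.isPath_of_length_eq_dist hp).getVert_injOn
  refine hX _ (p.getVert_mem_support k) (fun ha => ?_) (fun hb => ?_) hkX
  · have := hinj (by simp; omega) (by simp) (ha.trans p.getVert_zero.symm)
    omega
  · have := hinj (by simp; omega) (by simp) (hb.trans p.getVert_length.symm)
    omega

theorem SimpleGraph.dist_eq_two_of_commonNeighbors_nonempty (hne : a ≠ b) (hadj : ¬G.Adj a b)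
    (hc : (G.commonNeighbors a b).Nonempty) : G.dist a b = 2 := by
  obtain ⟨c, hac, hbc⟩ := hc
  have h := (hac.reachable.trans hbc.reachable.symm).coe_dist_eq_edist
  rw [edist_eq_two_iff.2 ⟨hne, hadj, c, hac, hbc⟩] at h
  exact_mod_cast h

theorem SimpleGraph.dist_eq_three {x y : V} (hax : G.Adj a x) (hxy : G.Adj x y)
    (hyb : G.Adj y b) (hne : a ≠ b) (hadj : ¬G.Adj a b) (hc : G.commonNeighbors a b = ∅) :
    G.dist a b = 3 := by
  let p : G.Walk a b := .cons hax (.cons hxy (.cons hyb .nil))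
  have h2 : 2 < (G.dist a b : ℕ∞) := by
    rw [p.reachable.coe_dist_eq_edist]
    exact two_lt_edist_iff.2 ⟨hne, hadj, hc⟩
  have h3 : G.dist a b ≤ 3 := dist_le p
  norm_cast at h2
  omega

theorem SimpleGraph.Reachable.add_one_le_dist_of_forall_adj {k : ℕ} (hr : G.Reachable a b)
    (hne : a ≠ b) (h : ∀ x, G.Adj a x → k ≤ G.dist x b) : k + 1 ≤ G.dist a b := by
  obtain ⟨p, hp⟩ := hr.exists_walk_length_eq_dist
  cases p with
  | nil => exact absurd rfl hne
  | cons hax q =>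
    have := h _ hax
    have := dist_le q
    simp only [Walk.length_cons] at hp
    omega

theorem not_xVisible_of_commonNeighbors_eq_singleton {c : V} (hne : a ≠ b)
    (hadj : ¬G.Adj a b) (hc : G.commonNeighbors a b = {c}) (hcX : c ∈ X) :
    ¬XVisible G X a b := by
  have hd := dist_eq_two_of_commonNeighbors_nonempty hne hadj (hc ▸ Set.singleton_nonempty c)
  refine not_xVisible_of_forall_getVert_mem fun p hp => ⟨1, by omega, by omega, ?_⟩
  rw [hd] at hp
  have hmid : p.getVert 1 ∈ G.commonNeighbors a b := by
    refine G.mem_commonNeighbors.2 ⟨?_, ?_⟩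
    · simpa using p.adj_getVert_succ (i := 0) (by omega)
    · simpa [p.getVert_of_length_le hp.le] using (p.adj_getVert_succ (i := 1) (by omega)).symm
  rw [hc, Set.mem_singleton_iff] at hmid
  rwa [hmid]

theorem DualVis.mem_iff_notMem_of_commonNeighbors_eq_singleton {c : V} (hX : DualVis G X)
    (hne : a ≠ b) (hadj : ¬G.Adj a b) (hc : G.commonNeighbors a b = {c}) (hcX : c ∈ X) :
    a ∈ X ↔ b ∉ X :=
  hX.mem_iff_notMem_of_not_xVisible (not_xVisible_of_commonNeighbors_eq_singleton hne hadj hc hcX)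

theorem not_xVisible_of_dist_eq_three (hd : G.dist a b = 3)
    (h : ∀ x y, G.Adj a x → G.Adj x y → G.Adj y b → x ∈ X ∨ y ∈ X) :
    ¬XVisible G X a b := by
  refine not_xVisible_of_forall_getVert_mem fun p hp => ?_
  rw [hd] at hp
  have h0 : G.Adj a (p.getVert 1) := by simpa using p.adj_getVert_succ (i := 0) (by omega)
  have h1 : G.Adj (p.getVert 1) (p.getVert 2) := p.adj_getVert_succ (by omega)
  have h2 : G.Adj (p.getVert 2) b := by
    simpa [p.getVert_of_length_le hp.le] using p.adj_getVert_succ (i := 2) (by omega)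
  rcases h _ _ h0 h1 h2 with hX | hX
  · exact ⟨1, by omega, by omega, hX⟩
  · exact ⟨2, by omega, by omega, hX⟩

theorem not_xVisible_of_dist_eq_four (hd : G.dist a b = 4)
    (h : ∀ x y z, G.Adj a x → G.Adj x y → G.Adj y z → G.Adj z b →
      x ∈ X ∨ y ∈ X ∨ z ∈ X) :
    ¬XVisible G X a b := by
  refine not_xVisible_of_forall_getVert_mem fun p hp => ?_
  rw [hd] at hp
  have h0 : G.Adj a (p.getVert 1) := by simpa using p.adj_getVert_succ (i := 0) (by omega)
  have h1 : G.Adj (p.getVert 1) (p.getVert 2) := p.adj_getVert_succ (by omega)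
  have h2 : G.Adj (p.getVert 2) (p.getVert 3) := p.adj_getVert_succ (by omega)
  have h3 : G.Adj (p.getVert 3) b := by
    simpa [p.getVert_of_length_le hp.le] using p.adj_getVert_succ (i := 3) (by omega)
  rcases h _ _ _ h0 h1 h2 h3 with hX | hX | hX
  · exact ⟨1, by omega, by omega, hX⟩
  · exact ⟨2, by omega, by omega, hX⟩
  · exact ⟨3, by omega, by omega, hX⟩

theorem SimpleGraph.Walk.exists_walk_of_adj_or_eq {r : V → V}
    (hr : ∀ ⦃x y⦄, G.Adj x y → r x = r y ∨ G.Adj (r x) (r y)) {x y : V} (p : G.Walk x y) :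
    ∃ q : G.Walk (r x) (r y), q.length ≤ p.length ∧
      ∀ w ∈ q.support, w ∈ Set.range r := by
  induction p with
  | nil => exact ⟨.nil, le_rfl, by simp⟩
  | cons h p ih =>
    obtain ⟨q, hq, hqr⟩ := ih
    rcases hr h with he | hadj
    · exact ⟨q.copy he.symm rfl, by simp; omega, by simpa using hqr⟩
    · refine ⟨.cons hadj q, by simpa using hq, ?_⟩
      simp only [Walk.support_cons, List.mem_cons, forall_eq_or_imp]
      exact ⟨⟨_, rfl⟩, hqr⟩

theorem xVisible_of_retraction {r : V → V}
    (hr : ∀ ⦃x y⦄, G.Adj x y → r x = r y ∨ G.Adj (r x) (r y)) (hrX : ∀ x, r x ∉ X)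
    (hab : G.Reachable a b) (ha : r a = a) (hb : r b = b) : XVisible G X a b := by
  obtain ⟨p, hp⟩ := hab.exists_walk_length_eq_dist
  obtain ⟨q, hq, hqr⟩ := p.exists_walk_of_adj_or_eq hr
  refine ⟨q.copy ha hb, le_antisymm (by simpa [hp] using hq) (dist_le _), ?_⟩
  intro w hw _ _
  obtain ⟨x, rfl⟩ := hqr w (by simpa using hw)
  exact hrX x

end Visibility

theorem Set.ncard_le_two_of_subset_triple {α : Type*} {X : Set α} {x y z : α}
    (h : X ⊆ {x, y, z}) (hxz : ¬(x ∈ X ∧ z ∈ X)) : X.ncard ≤ 2 := by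
  have hpair {p q : α} (hpq : X ⊆ {p, q}) : X.ncard ≤ 2 :=
    (Set.ncard_le_ncard hpq (Set.toFinite _)).trans
      ((Set.ncard_insert_le _ _).trans (by rw [Set.ncard_singleton]))
  by_cases hx : x ∈ X
  · exact hpair fun w hw => by
      rcases h hw with rfl | rfl | rfl
      exacts [Or.inl rfl, Or.inr rfl, absurd ⟨hx, hw⟩ hxz]
  · exact hpair fun w hw => by
      rcases h hw with rfl | rfl | rfl
      exacts [absurd hw hx, Or.inl rfl, Or.inr rfl]

namespace Gn

abbrev Vert (n : ℕ) : Type := (Fin n × Fin 3) ⊕ Fin 2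

variable {n : ℕ} {i j k : Fin n}

abbrev u : Vert n := .inr 0
abbrev v : Vert n := .inr 1
abbrev c (i : Fin n) (k : Fin 3) : Vert n := .inl (i, k)

@[simp] theorem adj_inr_inr {s t : Fin 2} : (Gn n).Adj (.inr s) (.inr t) ↔ s ≠ t := by
  fin_cases s <;> fin_cases t <;> simp [Gn]

@[simp] theorem adj_inr_inl {s : Fin 2} {l : Fin 3} :
    (Gn n).Adj (.inr s) (.inl (i, l)) ↔ s = 0 ∧ l = 0 ∨ s = 1 ∧ l = 2 := by
  fin_cases s <;> fin_cases l <;> simp [Gn]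

@[simp] theorem adj_inl_inr {s : Fin 2} {l : Fin 3} :
    (Gn n).Adj (.inl (i, l)) (.inr s) ↔ s = 0 ∧ l = 0 ∨ s = 1 ∧ l = 2 := by
  rw [adj_comm, adj_inr_inl]

@[simp] theorem adj_inl_inl {l m : Fin 3} :
    (Gn n).Adj (.inl (i, l)) (.inl (j, m)) ↔
      i = j ∧ (l = 0 ∧ m = 1 ∨ l = 1 ∧ m = 0 ∨ l = 1 ∧ m = 2 ∨ l = 2 ∧ m = 1) := by
  fin_cases l <;> fin_cases m <;> simp [Gn, eq_comm]

theorem adj_c_one_iff {x : Vert n} : (Gn n).Adj (c i 1) x ↔ x = c i 0 ∨ x = c i 2 := by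
  rcases x with ⟨j, l⟩ | t
  · fin_cases l <;> simp [eq_comm]
  · simp

theorem reachable_u (x : Vert n) : (Gn n).Reachable u x := by
  have hu0 (i : Fin n) : (Gn n).Reachable u (c i 0) := Adj.reachable (by simp)
  have huv : (Gn n).Reachable u v := Adj.reachable (by simp)
  rcases x with ⟨i, l⟩ | t
  · fin_cases l
    · exact hu0 i
    · exact (hu0 i).trans (Adj.reachable (by simp))
    · exact huv.trans (Adj.reachable (by simp))
  · fin_cases t
    · rfl
    · exact huv

theorem reachable (x y : Vert n) : (Gn n).Reachable x y :=
  (reachable_u x).symm.trans (reachable_u y)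

theorem commonNeighbors_u_c_one : (Gn n).commonNeighbors u (c i 1) = {c i 0} := by
  simp [Set.ext_iff, mem_commonNeighbors]
  grind

theorem commonNeighbors_v_c_one : (Gn n).commonNeighbors v (c i 1) = {c i 2} := by
  simp [Set.ext_iff, mem_commonNeighbors]
  grind

theorem commonNeighbors_u_c_two : (Gn n).commonNeighbors u (c i 2) = {v} := by
  simp [Set.ext_iff, mem_commonNeighbors]

theorem commonNeighbors_v_c_zero : (Gn n).commonNeighbors v (c i 0) = {u} := by
  simp [Set.ext_iff, mem_commonNeighbors]

theorem commonNeighbors_c_zero_c_two : (Gn n).commonNeighbors (c i 0) (c i 2) = {c i 1} := by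
  simp [Set.ext_iff, mem_commonNeighbors]
  grind

theorem commonNeighbors_c_zero_c_zero (hij : i ≠ j) :
    (Gn n).commonNeighbors (c i 0) (c j 0) = {u} := by
  simp [Set.ext_iff, mem_commonNeighbors]
  grind

theorem commonNeighbors_c_two_c_two (hij : i ≠ j) :
    (Gn n).commonNeighbors (c i 2) (c j 2) = {v} := by
  simp [Set.ext_iff, mem_commonNeighbors]
  grind

theorem commonNeighbors_c_zero_c_two_of_ne (hij : i ≠ j) :
    (Gn n).commonNeighbors (c i 0) (c j 2) = ∅ := by
  simp [Set.ext_iff, mem_commonNeighbors]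
  grind

theorem commonNeighbors_c_one_c_zero : (Gn n).commonNeighbors (c i 1) (c j 0) = ∅ := by
  simp [Set.ext_iff, mem_commonNeighbors]
  grind

theorem commonNeighbors_c_one_c_two : (Gn n).commonNeighbors (c i 1) (c j 2) = ∅ := by
  simp [Set.ext_iff, mem_commonNeighbors]
  grind

theorem dist_c_one_c_zero (hij : i ≠ j) : (Gn n).dist (c i 1) (c j 0) = 3 :=
  dist_eq_three (x := c i 0) (y := u) (by simp) (by simp) (by simp) (by simp) (by simp [hij])
    commonNeighbors_c_one_c_zero

theorem dist_c_one_c_two (hij : i ≠ j) : (Gn n).dist (c i 1) (c j 2) = 3 :=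
  dist_eq_three (x := c i 2) (y := v) (by simp) (by simp) (by simp) (by simp) (by simp [hij])
    commonNeighbors_c_one_c_two

theorem dist_c_one_c_one (hij : i ≠ j) : (Gn n).dist (c i 1) (c j 1) = 4 := by
  refine le_antisymm ?_ ((reachable _ _).add_one_le_dist_of_forall_adj (by simp [hij]) ?_)
  · let p : (Gn n).Walk (c i 1) (c j 1) :=
      .cons (v := c i 0) (by simp) (.cons (v := u) (by simp) (.cons (v := c j 0) (by simp)
        (.cons (by simp) .nil)))
    exact dist_le p
  · intro x hx
    rcases adj_c_one_iff.1 hx with rfl | rfl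
    · rw [SimpleGraph.dist_comm, dist_c_one_c_zero hij.symm]
    · rw [SimpleGraph.dist_comm, dist_c_one_c_two hij.symm]

def fold (i : Fin n) (x : Vert n) : Vert n :=
  if x = c i 0 then u else if x = c i 1 then v else x

theorem fold_adj ⦃x y : Vert n⦄ (h : (Gn n).Adj x y) :
    fold i x = fold i y ∨ (Gn n).Adj (fold i x) (fold i y) := by
  rcases x with ⟨k, l⟩ | s <;> rcases y with ⟨m, l'⟩ | t
  · fin_cases l <;> fin_cases l' <;> by_cases hk : k = i <;> by_cases hm : m = i <;>
      simp_all [fold]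
  · fin_cases l <;> fin_cases t <;> by_cases hk : k = i <;> simp_all [fold]
  · fin_cases s <;> fin_cases l' <;> by_cases hm : m = i <;> simp_all [fold]
  · fin_cases s <;> fin_cases t <;> simp_all [fold]

theorem fold_notMem (x : Vert n) : fold i x ∉ ({c i 0, c i 1} : Set (Vert n)) := by
  unfold fold
  split_ifs <;> simp_all

theorem fold_of_notMem {x : Vert n} (hx : x ∉ ({c i 0, c i 1} : Set (Vert n))) :
    fold i x = x := by
  simp_all [fold]

theorem dualVis_pair (i : Fin n) : DualVis (Gn n) {c i 0, c i 1} := by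
  refine ⟨?_, fun a ha b hb => xVisible_of_retraction fold_adj fold_notMem (reachable a b)
    (fold_of_notMem ha) (fold_of_notMem hb)⟩
  rintro a (rfl | rfl) b (rfl | rfl)
  · exact xVisible_refl _ _ _
  · exact Adj.xVisible (by simp)
  · exact Adj.xVisible (by simp)
  · exact xVisible_refl _ _ _

variable {X : Set (Vert n)}

theorem not_xVisible_c_one_c_zero (hij : i ≠ j) (h : c i 0 ∈ X) :
    ¬XVisible (Gn n) X (c i 1) (c j 0) := by
  refine not_xVisible_of_dist_eq_three (dist_c_one_c_zero hij) fun x y hx hxy hy => Or.inl ?_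
  rcases adj_c_one_iff.1 hx with rfl | rfl
  · exact h
  · have hy' := (Gn n).mem_commonNeighbors.2 ⟨hxy, hy.symm⟩
    rw [commonNeighbors_symm, commonNeighbors_c_zero_c_two_of_ne hij.symm] at hy'
    exact hy'.elim

theorem not_xVisible_c_one_c_two (hij : i ≠ j) (h : c i 2 ∈ X) :
    ¬XVisible (Gn n) X (c i 1) (c j 2) := by
  refine not_xVisible_of_dist_eq_three (dist_c_one_c_two hij) fun x y hx hxy hy => Or.inl ?_
  rcases adj_c_one_iff.1 hx with rfl | rfl
  · have hy' := (Gn n).mem_commonNeighbors.2 ⟨hxy, hy.symm⟩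
    rw [commonNeighbors_c_zero_c_two_of_ne hij] at hy'
    exact hy'.elim
  · exact h

-- The only geodesics are `(i,1), (i,0), u, (j,0), (j,1)` and `(i,1), (i,2), v, (j,2), (j,1)`.
theorem not_xVisible_c_one_c_one (hij : i ≠ j) (h0 : c i 0 ∈ X ∨ u ∈ X ∨ c j 0 ∈ X)
    (h2 : c i 2 ∈ X ∨ v ∈ X ∨ c j 2 ∈ X) : ¬XVisible (Gn n) X (c i 1) (c j 1) := by
  refine not_xVisible_of_dist_eq_four (dist_c_one_c_one hij) fun x y z hx hxy hyz hz => ?_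
  have hy := (Gn n).mem_commonNeighbors.2 ⟨hxy, hyz.symm⟩
  rcases adj_c_one_iff.1 hx with rfl | rfl <;> rcases adj_c_one_iff.1 hz.symm with rfl | rfl
  · rw [commonNeighbors_c_zero_c_zero hij, Set.mem_singleton_iff] at hy
    exact hy ▸ h0
  · rw [commonNeighbors_c_zero_c_two_of_ne hij] at hy
    exact hy.elim
  · rw [commonNeighbors_symm, commonNeighbors_c_zero_c_two_of_ne hij.symm] at hy
    exact hy.elim
  · rw [commonNeighbors_c_two_c_two hij, Set.mem_singleton_iff] at hy
    exact hy ▸ h2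

theorem v_mem_of_u_mem (hX : DualVis (Gn n) X) (hij : i ≠ j) (hu : u ∈ X) : v ∈ X := by
  by_contra hv
  have h0 (k : Fin n) : c k 0 ∈ X := by
    simpa [hv] using hX.mem_iff_notMem_of_commonNeighbors_eq_singleton (by simp) (by simp)
      commonNeighbors_v_c_zero hu
  simpa [h0] using hX.mem_iff_notMem_of_commonNeighbors_eq_singleton (by simp [hij])
    (by simp [hij]) (commonNeighbors_c_zero_c_zero hij) hu

theorem u_mem_of_v_mem (hX : DualVis (Gn n) X) (hij : i ≠ j) (hv : v ∈ X) : u ∈ X := by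
  by_contra hu
  have h2 (k : Fin n) : c k 2 ∈ X := by
    simpa [hu] using hX.mem_iff_notMem_of_commonNeighbors_eq_singleton (by simp) (by simp)
      commonNeighbors_u_c_two hv
  simpa [h2] using hX.mem_iff_notMem_of_commonNeighbors_eq_singleton (by simp [hij])
    (by simp [hij]) (commonNeighbors_c_two_c_two hij) hv

theorem c_zero_mem_iff_c_two_notMem (hX : DualVis (Gn n) X) (h : c k 1 ∈ X) :
    c k 0 ∈ X ↔ c k 2 ∉ X :=
  hX.mem_iff_notMem_of_commonNeighbors_eq_singleton (by simp) (by simp)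
    commonNeighbors_c_zero_c_two h

theorem u_notMem_of_v_mem (hX : DualVis (Gn n) X) (hij : i ≠ j) (hv : v ∈ X) : u ∉ X := by
  intro hu
  have h1 (k : Fin n) : c k 1 ∉ X := by
    intro h1
    have h0 : c k 0 ∉ X := fun h0 => by
      simpa [hu, h1] using hX.mem_iff_notMem_of_commonNeighbors_eq_singleton (by simp)
        (by simp) commonNeighbors_u_c_one h0
    have h2 : c k 2 ∉ X := fun h2 => by
      simpa [hv, h1] using hX.mem_iff_notMem_of_commonNeighbors_eq_singleton (by simp)
        (by simp) commonNeighbors_v_c_one h2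
    simpa [h0, h2] using c_zero_mem_iff_c_two_notMem hX h1
  exact not_xVisible_c_one_c_one hij (Or.inr (Or.inl hu)) (Or.inr (Or.inl hv))
    (hX.2 (h1 i) (h1 j))

theorem u_notMem (hX : DualVis (Gn n) X) (hij : i ≠ j) : u ∉ X :=
  fun hu => u_notMem_of_v_mem hX hij (v_mem_of_u_mem hX hij hu) hu

theorem v_notMem (hX : DualVis (Gn n) X) (hij : i ≠ j) : v ∉ X :=
  fun hv => u_notMem_of_v_mem hX hij hv (u_mem_of_v_mem hX hij hv)

theorem c_one_mem_of_c_zero_mem (hX : DualVis (Gn n) X) (hu : u ∉ X) (h : c k 0 ∈ X) :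
    c k 1 ∈ X := by
  simpa [hu] using hX.mem_iff_notMem_of_commonNeighbors_eq_singleton (by simp) (by simp)
    commonNeighbors_u_c_one h

theorem c_one_mem_of_c_two_mem (hX : DualVis (Gn n) X) (hv : v ∉ X) (h : c k 2 ∈ X) :
    c k 1 ∈ X := by
  simpa [hv] using hX.mem_iff_notMem_of_commonNeighbors_eq_singleton (by simp) (by simp)
    commonNeighbors_v_c_one h

theorem eq_of_c_one_mem (hX : DualVis (Gn n) X) (hi : c i 1 ∈ X) (hj : c j 1 ∈ X) : i = j := by
  by_contra hij
  have hi' := c_zero_mem_iff_c_two_notMem hX hi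
  have hj' := c_zero_mem_iff_c_two_notMem hX hj
  by_cases hi0 : c i 0 ∈ X <;> by_cases hj0 : c j 0 ∈ X
  · exact not_xVisible_c_one_c_zero hij hi0 (hX.1 hi hj0)
  · exact not_xVisible_c_one_c_one hij (Or.inl hi0) (Or.inr (Or.inr (by tauto))) (hX.1 hi hj)
  · exact not_xVisible_c_one_c_one hij (Or.inr (Or.inr hj0)) (Or.inl (by tauto)) (hX.1 hi hj)
  · exact not_xVisible_c_one_c_two hij (by tauto) (hX.1 hi (by tauto))

theorem exists_eq_c_of_mem (hX : DualVis (Gn n) X) (hu : u ∉ X) (hv : v ∉ X) {x : Vert n}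
    (hx : x ∈ X) : ∃ k l, x = c k l ∧ c k 1 ∈ X := by
  rcases x with ⟨k, l⟩ | t
  · refine ⟨k, l, rfl, ?_⟩
    fin_cases l
    · exact c_one_mem_of_c_zero_mem hX hu hx
    · exact hx
    · exact c_one_mem_of_c_two_mem hX hv hx
  · fin_cases t <;> contradiction

theorem ncard_le_two_of_dualVis (hX : DualVis (Gn n) X) (hij : i ≠ j) : X.ncard ≤ 2 := by
  have hu := u_notMem hX hij
  have hv := v_notMem hX hij
  rcases X.eq_empty_or_nonempty with rfl | ⟨x, hx⟩
  · simp
  obtain ⟨k, -, -, hk⟩ := exists_eq_c_of_mem hX hu hv hx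
  refine Set.ncard_le_two_of_subset_triple (x := c k 0) (y := c k 1) (z := c k 2)
    (fun y hy => ?_) fun ⟨h0, h2⟩ =>
      (c_zero_mem_iff_c_two_notMem hX (c_one_mem_of_c_zero_mem hX hu h0)).1 h0 h2
  obtain ⟨m, l, rfl, hm⟩ := exists_eq_c_of_mem hX hu hv hy
  obtain rfl := eq_of_c_one_mem hX hm hk
  fin_cases l <;> simp

end Gn

theorem stmt_7 (n : ℕ) (hn : 2 ≤ n) :
    (∃ X : Set ((Fin n × Fin 3) ⊕ Fin 2), DualVis (Gn n) X ∧ X.ncard = 2) ∧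
    (∀ X : Set ((Fin n × Fin 3) ⊕ Fin 2), DualVis (Gn n) X → X.ncard ≤ 2) := by
  let i : Fin n := ⟨0, by omega⟩
  let j : Fin n := ⟨1, by omega⟩
  have hij : i ≠ j := by simp [i, j, Fin.ext_iff]
  exact ⟨⟨{Gn.c i 0, Gn.c i 1}, Gn.dualVis_pair i, Set.ncard_pair (by simp)⟩,
    fun X hX => Gn.ncard_le_two_of_dualVis hX hij⟩
end

section
/- For n ≥ 3, a subset X of the vertices of the complete bipartite graph K_{n,n} with parts A and B is a mutual-visibility set if and only if one of the following holds: (a) |X∩A| ≤ n−1 and |X∩B| ≤ n−1; (b) X = A or X = B; (c) A ⊆ X and |X∩B| = 1; (d) B ⊆ X and |X∩A| = 1. In particular μ(K_{n,n}) = 2n−2. -/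
open SimpleGraph

variable {V : Type*}

/-!
Vertices on opposite sides of a complete bipartite graph are adjacent, hence always visible.
Two distinct vertices on the same side are at distance 2, and every shortest path between them
passes through a single vertex of the other side; so they are `X`-visible exactly when the other
side is not contained in `X`. Thus `X` is a mutual-visibility set iff, whenever `X` contains two
vertices of one side, it misses a vertex of the other, and both the case distinction and the
bound `2n - 2` are counting with the sizes of the two parts of `X`.
-/

lemma xVisible_self (G : SimpleGraph V) (X : Set V) (u : V) : XVisible G X u u :=
  ⟨.nil, by simp, fun _ hw hu _ => by simp_all⟩

section Visibility

variable {G : SimpleGraph V} {X : Set V} {u v w : V}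

lemma xVisible_of_adj (X : Set V) (h : G.Adj u v) : XVisible G X u v :=
  ⟨.cons h .nil, by simp [dist_eq_one_iff_adj.mpr h], fun _ hw hu hv => by simp_all⟩

lemma xVisible_of_mem_commonNeighbors (huv : u ≠ v) (hadj : ¬G.Adj u v)
    (hw : w ∈ G.commonNeighbors u v) (hwX : w ∉ X) : XVisible G X u v := by
  have hdist : G.dist u v = 2 := by
    simp [SimpleGraph.dist, edist_eq_two_iff.mpr ⟨huv, hadj, w, hw⟩]
  rw [mem_commonNeighbors] at hw
  exact ⟨.cons hw.1 (.cons hw.2.symm .nil), by simp [hdist], fun _ _ _ _ => by simp_all⟩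

lemma XVisible.exists_adj_notMem (huv : u ≠ v) (hadj : ¬G.Adj u v) (h : XVisible G X u v) :
    ∃ w, G.Adj u w ∧ w ∉ X := by
  obtain ⟨p, -, hint⟩ := h
  cases p with
  | nil => exact absurd rfl huv
  | @cons _ w _ huw q =>
    exact ⟨w, huw, hint w (by simp) huw.ne.symm (by rintro rfl; exact hadj huw)⟩

end Visibility

section CompleteBipartite

variable {α β : Type*} {X : Set (α ⊕ β)}

lemma xVisible_completeBipartiteGraph_inl_inl_iff {a a' : α} (ha : a ≠ a') :
    XVisible (completeBipartiteGraph α β) X (.inl a) (.inl a') ↔ ¬Set.range Sum.inr ⊆ X := by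
  simp only [Set.range_subset_iff, not_forall]
  constructor
  · intro h
    obtain ⟨w | b, hw, hwX⟩ := h.exists_adj_notMem (by simpa using ha) (by simp)
    · simp at hw
    · exact ⟨b, hwX⟩
  · rintro ⟨b, hb⟩
    exact xVisible_of_mem_commonNeighbors (by simpa using ha) (by simp)
      (by simp [mem_commonNeighbors]) hb

lemma xVisible_completeBipartiteGraph_inr_inr_iff {b b' : β} (hb : b ≠ b') :
    XVisible (completeBipartiteGraph α β) X (.inr b) (.inr b') ↔ ¬Set.range Sum.inl ⊆ X := by
  simp only [Set.range_subset_iff, not_forall]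
  constructor
  · intro h
    obtain ⟨a | w, hw, hwX⟩ := h.exists_adj_notMem (by simpa using hb) (by simp)
    · exact ⟨a, hwX⟩
    · simp at hw
  · rintro ⟨a, ha⟩
    exact xVisible_of_mem_commonNeighbors (by simpa using hb) (by simp)
      (by simp [mem_commonNeighbors]) ha

lemma mutualVis_completeBipartiteGraph_iff :
    MutualVis (completeBipartiteGraph α β) X ↔
      ((X ∩ Set.range Sum.inl).Nontrivial → ¬Set.range Sum.inr ⊆ X) ∧
        ((X ∩ Set.range Sum.inr).Nontrivial → ¬Set.range Sum.inl ⊆ X) := by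
  constructor
  · refine fun h => ⟨?_, ?_⟩
    · rintro ⟨_, ⟨hx, a, rfl⟩, _, ⟨hy, a', rfl⟩, hne⟩
      exact (xVisible_completeBipartiteGraph_inl_inl_iff (by simpa using hne)).mp (h hx hy)
    · rintro ⟨_, ⟨hx, b, rfl⟩, _, ⟨hy, b', rfl⟩, hne⟩
      exact (xVisible_completeBipartiteGraph_inr_inr_iff (by simpa using hne)).mp (h hx hy)
  · rintro ⟨hA, hB⟩ (a | b) hu (a' | b') hv
    · rcases eq_or_ne a a' with rfl | hne
      · exact xVisible_self _ _ _
      · exact (xVisible_completeBipartiteGraph_inl_inl_iff hne).mpr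
          (hA ⟨_, ⟨hu, a, rfl⟩, _, ⟨hv, a', rfl⟩, by simpa using hne⟩)
    · exact xVisible_of_adj X (by simp)
    · exact xVisible_of_adj X (by simp)
    · rcases eq_or_ne b b' with rfl | hne
      · exact xVisible_self _ _ _
      · exact (xVisible_completeBipartiteGraph_inr_inr_iff hne).mpr
          (hB ⟨_, ⟨hu, b, rfl⟩, _, ⟨hv, b', rfl⟩, by simpa using hne⟩)

end CompleteBipartite

lemma Set.subset_iff_ncard_inter_eq {γ : Type*} {s X : Set γ} (hs : s.Finite) :
    s ⊆ X ↔ (X ∩ s).ncard = s.ncard :=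
  ⟨fun h => by rw [Set.inter_eq_right.mpr h],
    fun h => Set.inter_eq_right.mp (Set.eq_of_subset_of_ncard_le Set.inter_subset_right h.ge hs)⟩

section SumParts

variable {α β : Type*} (X : Set (α ⊕ β))

lemma Set.eq_range_inl_iff :
    X = Set.range Sum.inl ↔ Set.range Sum.inl ⊆ X ∧ X ∩ Set.range Sum.inr = ∅ := by
  rw [← Set.compl_range_inl, ← Set.sdiff_eq, Set.sdiff_eq_empty, Set.Subset.antisymm_iff,
    and_comm]

lemma Set.eq_range_inr_iff :
    X = Set.range Sum.inr ↔ Set.range Sum.inr ⊆ X ∧ X ∩ Set.range Sum.inl = ∅ := by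
  rw [← Set.compl_range_inr, ← Set.sdiff_eq, Set.sdiff_eq_empty, Set.Subset.antisymm_iff,
    and_comm]

lemma Set.ncard_inter_range_inl_add_ncard_inter_range_inr [Finite α] [Finite β] :
    (X ∩ Set.range Sum.inl).ncard + (X ∩ Set.range Sum.inr).ncard = X.ncard := by
  rw [← Set.compl_range_inl, ← Set.sdiff_eq, Set.ncard_inter_add_ncard_sdiff_eq_ncard]

lemma Set.subset_range_inl_iff_ncard_inter_eq [Finite α] :
    Set.range Sum.inl ⊆ X ↔ (X ∩ Set.range Sum.inl).ncard = Nat.card α := by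
  rw [Set.subset_iff_ncard_inter_eq (Set.toFinite _),
    Set.ncard_range_of_injective Sum.inl_injective]

lemma Set.subset_range_inr_iff_ncard_inter_eq [Finite β] :
    Set.range Sum.inr ⊆ X ↔ (X ∩ Set.range Sum.inr).ncard = Nat.card β := by
  rw [Set.subset_iff_ncard_inter_eq (Set.toFinite _),
    Set.ncard_range_of_injective Sum.inr_injective]

lemma Set.ncard_inter_range_inl_le [Finite α] : (X ∩ Set.range Sum.inl).ncard ≤ Nat.card α :=
  (Set.ncard_inter_le_ncard_right X _).trans (Set.ncard_range_of_injective Sum.inl_injective).le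

lemma Set.ncard_inter_range_inr_le [Finite β] : (X ∩ Set.range Sum.inr).ncard ≤ Nat.card β :=
  (Set.ncard_inter_le_ncard_right X _).trans (Set.ncard_range_of_injective Sum.inr_injective).le

lemma mutualVis_completeBipartiteGraph_iff_ncard [Finite α] [Finite β] :
    MutualVis (completeBipartiteGraph α β) X ↔
      (1 < (X ∩ Set.range Sum.inl).ncard → (X ∩ Set.range Sum.inr).ncard ≠ Nat.card β) ∧
        (1 < (X ∩ Set.range Sum.inr).ncard → (X ∩ Set.range Sum.inl).ncard ≠ Nat.card α) := by
  simp only [mutualVis_completeBipartiteGraph_iff, ← Set.one_lt_ncard_iff_nontrivial,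
    Set.subset_range_inl_iff_ncard_inter_eq, Set.subset_range_inr_iff_ncard_inter_eq]

end SumParts

theorem stmt_9 (n : ℕ) (hn : 3 ≤ n) :
    (∀ X : Set (Fin n ⊕ Fin n),
      MutualVis (completeBipartiteGraph (Fin n) (Fin n)) X ↔
        ((X ∩ Set.range Sum.inl).ncard ≤ n - 1 ∧
            (X ∩ Set.range Sum.inr).ncard ≤ n - 1) ∨
          (X = Set.range Sum.inl ∨ X = Set.range Sum.inr) ∨
          (Set.range Sum.inl ⊆ X ∧ (X ∩ Set.range Sum.inr).ncard = 1) ∨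
          (Set.range Sum.inr ⊆ X ∧ (X ∩ Set.range Sum.inl).ncard = 1)) ∧
    (∃ X : Set (Fin n ⊕ Fin n),
      MutualVis (completeBipartiteGraph (Fin n) (Fin n)) X ∧
        X.ncard = 2 * n - 2) ∧
    (∀ X : Set (Fin n ⊕ Fin n),
      MutualVis (completeBipartiteGraph (Fin n) (Fin n)) X →
        X.ncard ≤ 2 * n - 2) := by
  refine ⟨fun X => ?_, ?_, fun X hX => ?_⟩
  · have hA := X.ncard_inter_range_inl_le
    have hB := X.ncard_inter_range_inr_le
    rw [mutualVis_completeBipartiteGraph_iff_ncard, Set.eq_range_inl_iff, Set.eq_range_inr_iff,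
      Set.subset_range_inl_iff_ncard_inter_eq, Set.subset_range_inr_iff_ncard_inter_eq,
      ← Set.ncard_eq_zero, ← Set.ncard_eq_zero]
    simp only [Nat.card_fin] at hA hB ⊢
    omega
  · have h0 : 0 < n := by omega
    refine ⟨{.inl ⟨0, h0⟩, .inr ⟨0, h0⟩}ᶜ, ?_, ?_⟩
    · refine mutualVis_completeBipartiteGraph_iff.mpr ⟨fun _ h => ?_, fun _ h => ?_⟩
      · simpa using h ⟨⟨0, h0⟩, rfl⟩
      · simpa using h ⟨⟨0, h0⟩, rfl⟩
    · rw [Set.ncard_compl, Set.ncard_pair Sum.inl_ne_inr, Nat.card_sum, Nat.card_fin]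
      omega
  · have hA := X.ncard_inter_range_inl_le
    have hB := X.ncard_inter_range_inr_le
    rw [mutualVis_completeBipartiteGraph_iff_ncard] at hX
    rw [← Set.ncard_inter_range_inl_add_ncard_inter_range_inr]
    simp only [Nat.card_fin] at hA hB hX ⊢
    omega
end

section
/- If G is a geodetic graph, then the total mutual-visibility number of G equals the number of simplicial vertices of G, and the set S(G) of simplicial vertices is the unique maximum total mutual-visibility set of G. -/
/-!
An internal vertex `w` of a geodesic has its two neighbours on the geodesic at distance two,
so `w` is not simplicial; hence the simplicial vertices are totally mutually visible. Conversely,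
a non-simplicial vertex `w` has neighbours `x ≠ y` that are not adjacent, so `x w y` is a
geodesic, and in a geodetic graph it is the only one: `w` blocks `x` from `y`. Thus every total
mutual-visibility set consists of simplicial vertices.
-/

open SimpleGraph

variable {V : Type*}

/-- `G` is geodetic: shortest paths are unique. -/
def Geodetic (G : SimpleGraph V) : Prop :=
  ∀ (u v : V) (p q : G.Walk u v),
    p.length = G.dist u v → q.length = G.dist u v → p = q

/-- `v` is a simplicial vertex of `G`. -/
def Simplicial (G : SimpleGraph V) (v : V) : Prop :=
  ∀ ⦃x⦄, G.Adj v x → ∀ ⦃y⦄, G.Adj v y → x ≠ y → G.Adj x y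

namespace SimpleGraph.Walk

variable {G : SimpleGraph V} {u v w : V}

lemma exists_adj_adj_not_adj_ne_of_mem_support {p : G.Walk u v} (hp : p.length = G.dist u v)
    (hw : w ∈ p.support) (hwu : w ≠ u) (hwv : w ≠ v) :
    ∃ x y, G.Adj x w ∧ G.Adj w y ∧ ¬ G.Adj x y ∧ x ≠ y := by
  classical
  set q := p.takeUntil w hw
  set r := p.dropUntil w hw
  have hq : ¬ q.Nil := fun h => hwu h.eq.symm
  have hr : ¬ r.Nil := fun h => hwv h.eq
  let c : G.Walk q.penultimate r.snd := cons (q.adj_penultimate hq) (cons (r.adj_snd hr) nil)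
  have hc : c.IsSubwalk p := by
    refine ⟨q.dropLast, r.tail, ?_⟩
    calc p = q.append r := (p.take_spec hw).symm
      _ = (q.dropLast.concat (q.adj_penultimate hq)).append (cons (r.adj_snd hr) r.tail) := by
        rw [concat_dropLast, r.cons_tail_eq hr]
      _ = (q.dropLast.append c).append r.tail := by rw [concat_append, ← append_assoc]; rfl
  have hdist : G.dist q.penultimate r.snd = 2 := (length_eq_dist_of_subwalk hp hc).symm
  refine ⟨_, _, q.adj_penultimate hq, r.adj_snd hr, fun h => ?_, fun h => ?_⟩
  · simp [dist_eq_one_iff_adj.mpr h] at hdist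
  · simp [h] at hdist

end SimpleGraph.Walk

variable {G : SimpleGraph V}

lemma totalVis_setOf_simplicial (hG : G.Connected) : TotalVis G {v | Simplicial G v} := by
  intro u v
  obtain ⟨p, hp⟩ := hG.exists_walk_length_eq_dist u v
  refine ⟨p, hp, fun w hw hwu hwv hs => ?_⟩
  obtain ⟨x, y, hxw, hwy, hxy, hne⟩ := p.exists_adj_adj_not_adj_ne_of_mem_support hp hw hwu hwv
  exact hxy (hs hxw.symm hwy hne)

lemma Geodetic.subset_setOf_simplicial_of_totalVis (hgeo : Geodetic G) {X : Set V}
    (hX : TotalVis G X) : X ⊆ {v | Simplicial G v} := by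
  intro w hwX
  by_contra hns
  simp only [Set.mem_ofPred_eq, Simplicial, not_forall] at hns
  obtain ⟨x, hwx, y, hwy, hne, hxy⟩ := hns
  let c : G.Walk x y := .cons hwx.symm (.cons hwy .nil)
  have hc : c.length = G.dist x y :=
    le_antisymm (c.reachable.one_lt_dist_of_ne_of_not_adj hne hxy) (G.dist_le c)
  obtain ⟨p, hp, hvis⟩ := hX x y
  obtain rfl : p = c := hgeo x y p c hp hc
  exact hvis w (by simp [c]) hwx.ne hwy.ne hwX

theorem stmt_13 [Fintype V] (G : SimpleGraph V) (hG : G.Connected)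
    (hgeo : Geodetic G) :
    TotalVis G {v | Simplicial G v} ∧
    (∀ X : Set V, TotalVis G X → X.ncard ≤ ({v | Simplicial G v} : Set V).ncard) ∧
    (∀ X : Set V, TotalVis G X → X.ncard = ({v | Simplicial G v} : Set V).ncard →
      X = {v | Simplicial G v}) :=
  ⟨totalVis_setOf_simplicial hG,
    fun _ hX => Set.ncard_le_ncard (hgeo.subset_setOf_simplicial_of_totalVis hX),
    fun _ hX hcard => Set.eq_of_subset_of_ncard_le
      (hgeo.subset_setOf_simplicial_of_totalVis hX) hcard.ge⟩
end

section
/- For a connected graph G and X ⊆ V(G), the following are equivalent: (i) X is a total mutual-visibility set of G; (ii) any two vertices u,v with d_G(u,v) = 2 are X-visible; (iii) any two vertices u,v with d_G(u,v) = 2 satisfy N_G(u) ∩ N_G(v) ⊄ X. -/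
open SimpleGraph

variable {V : Type*}

/-!
Visibility of a pair at distance `2` means exactly a common neighbour outside `X`. Conversely,
if every such pair has one, a visible geodesic from `u` to `v` is built by induction on the
distance: take a visible geodesic `x, y, …, v` from a neighbour `x` of `u` on a geodesic to `v`;
then `d(u, y) = 2`, and replacing `x` by a common neighbour of `u` and `y` outside `X` yields a
geodesic from `u` whose internal vertices all avoid `X`.
-/

lemma SimpleGraph.Connected.dist_eq_add_one_of_length_cons_eq_dist {G : SimpleGraph V}
    (hG : G.Connected) {u x v : V} (hux : G.Adj u x) (q : G.Walk x v)
    (hp : (q.cons hux).length = G.dist u v) :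
    G.dist u v = G.dist x v + 1 := by
  have hq : G.dist x v ≤ q.length := dist_le q
  have htri : G.dist u v ≤ G.dist u x + G.dist x v := hG.dist_triangle
  rw [dist_eq_one_iff_adj.mpr hux] at htri
  simp only [Walk.length_cons] at hp
  omega

namespace XVisible

variable {G : SimpleGraph V} {X : Set V} {u v x : V}

lemma refl : XVisible G X u u :=
  ⟨.nil, by simp, by simp⟩

lemma of_adj (h : G.Adj u v) : XVisible G X u v :=
  ⟨h.toWalk, by simp [dist_eq_one_iff_adj.mpr h], by simp +contextual⟩

lemma not_neighborSet_inter_subset (hd : G.dist u v = 2) (h : XVisible G X u v) :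
    ¬ (G.neighborSet u ∩ G.neighborSet v ⊆ X) := by
  obtain ⟨p, hp, hpX⟩ := h
  rw [hd] at hp
  match p, hp with
  | .cons huz (.cons hzv .nil), _ =>
    exact fun hsub => hpX _ (by simp) huz.ne.symm hzv.ne (hsub ⟨huz, hzv.symm⟩)

lemma of_adj_of_dist_eq_add_one (hG : G.Connected)
    (hX : ∀ y, G.dist u y = 2 → ¬ (G.neighborSet u ∩ G.neighborSet y ⊆ X))
    (hux : G.Adj u x) (hd : G.dist u v = G.dist x v + 1) (hvis : XVisible G X x v) :
    XVisible G X u v := by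
  obtain ⟨P, hP, hPX⟩ := hvis
  cases P with
  | nil => exact of_adj hux
  | @cons _ y _ hxy Q =>
    have hyv : G.dist y v ≤ Q.length := dist_le Q
    have huy_le : G.dist u y ≤ 2 := by simpa using dist_le (.cons hux hxy.toWalk)
    have htri : G.dist u v ≤ G.dist u y + G.dist y v := hG.dist_triangle
    have hQ : Q.length + 1 = G.dist x v := by simpa using hP
    obtain ⟨z, ⟨huz, hzy⟩, hzX⟩ := Set.not_subset.mp (hX y (by omega))
    rw [mem_neighborSet] at huz hzy
    have hxQ : x ∉ Q.support :=
      ((Walk.cons_isPath_iff _ _).mp (Walk.isPath_of_length_eq_dist _ hP)).2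
    refine ⟨.cons huz (.cons hzy.symm Q), by simp only [Walk.length_cons]; omega, ?_⟩
    intro w hw hwu hwv
    simp only [Walk.support_cons, List.mem_cons] at hw
    rcases hw with rfl | rfl | hw
    · exact absurd rfl hwu
    · exact hzX
    · exact hPX w (by simp [hw]) (ne_of_mem_of_not_mem hw hxQ) hwv

end XVisible

theorem totalVis_of_forall_dist_eq_two {G : SimpleGraph V} {X : Set V} (hG : G.Connected)
    (hX : ∀ u v, G.dist u v = 2 → ¬ (G.neighborSet u ∩ G.neighborSet v ⊆ X)) :
    TotalVis G X := by
  suffices ∀ n u v, G.dist u v = n → XVisible G X u v from fun u v => this _ u v rfl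
  intro n
  induction n with
  | zero =>
    intro u v hd
    obtain rfl := hG.dist_eq_zero_iff.mp hd
    exact .refl
  | succ n ih =>
    intro u v hd
    obtain ⟨p, hp⟩ := hG.exists_walk_length_eq_dist u v
    cases p with
    | nil => simp at hd
    | cons hux q =>
      have hd' := hG.dist_eq_add_one_of_length_cons_eq_dist hux q hp
      exact .of_adj_of_dist_eq_add_one hG (hX u) hux hd' (ih _ _ (by omega))

theorem stmt_14 (G : SimpleGraph V) (hG : G.Connected) (X : Set V) :
    List.TFAE
      [TotalVis G X,
       ∀ u v : V, G.dist u v = 2 → XVisible G X u v,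
       ∀ u v : V, G.dist u v = 2 →
         ¬ (G.neighborSet u ∩ G.neighborSet v ⊆ X)] := by
  tfae_have 1 → 2 := fun h u v _ => h u v
  tfae_have 2 → 3 := fun h u v hd => (h u v hd).not_neighborSet_inter_subset hd
  tfae_have 3 → 1 := totalVis_of_forall_dist_eq_two hG
  tfae_finish
end

section
/- For a connected graph G, μ_t(G) = 1 if and only if G has at least one bypass vertex and any two distinct bypass vertices v1, v2 satisfy: there exist nonadjacent vertices u1, u2 with N_G(u1) ∩ N_G(u2) = {v1, v2}. -/
open SimpleGraph

variable {V : Type*}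

/-- `v` is a bypass vertex of `G`: it is not the central vertex of a convex
path on three vertices, i.e. every two distinct nonadjacent neighbors of `v`
have a common neighbor other than `v`. -/
def Bypass (G : SimpleGraph V) (v : V) : Prop :=
  ∀ ⦃x⦄, G.Adj v x → ∀ ⦃y⦄, G.Adj v y → x ≠ y → ¬ G.Adj x y →
    ∃ w, w ≠ v ∧ G.Adj x w ∧ G.Adj y w

/-! A vertex `v` is a bypass vertex exactly when `{v}` is a total mutual-visibility set: an
internal vertex `v` of a geodesic has path-neighbours `x, y` at distance two, and replacing `v` by
another common neighbour of `x, y` gives another geodesic. Hence `μ_t(G) ≥ 1` iff a bypass vertex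
exists, and `μ_t(G) ≤ 1` iff no pair `{v₁, v₂}` of bypass vertices is total. If `{v₁, v₂}` is not,
some geodesic avoiding `v₁` must pass through `v₂`, and the neighbours `x, y` of `v₂` on it have no
common neighbour outside `{v₁, v₂}`, while bypassness of `v₂` provides `v₁` as one. Conversely,
nonadjacent `u₁, u₂` with `N(u₁) ∩ N(u₂) = {v₁, v₂}` are not `{v₁, v₂}`-visible. -/

namespace SimpleGraph

variable {G : SimpleGraph V} {a b u v : V}

lemma dist_eq_two_iff :
    G.dist u v = 2 ↔ u ≠ v ∧ ¬ G.Adj u v ∧ (G.commonNeighbors u v).Nonempty := by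
  rw [dist, ENat.toNat_eq_iff two_ne_zero, Nat.cast_ofNat, edist_eq_two_iff]

lemma Walk.exists_eq_append_cons_cons {p : G.Walk a b} (hv : v ∈ p.support) (ha : v ≠ a)
    (hb : v ≠ b) : ∃ (x y : V) (q : G.Walk a x) (hx : G.Adj x v) (hy : G.Adj v y)
      (r : G.Walk y b), p = q.append (cons hx (cons hy r)) := by
  classical
  have hq : ¬ (p.takeUntil v hv).Nil := not_nil_of_ne ha.symm
  have hr : ¬ (p.dropUntil v hv).Nil := not_nil_of_ne hb
  refine ⟨_, _, (p.takeUntil v hv).dropLast, adj_penultimate hq, adj_snd hr,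
    (p.dropUntil v hv).tail, ?_⟩
  rw [← concat_append, concat_dropLast, cons_tail_eq _ hr, take_spec]

lemma Walk.exists_reroute_xVisible {X : Set V} {p : G.Walk a b} (hp : p.length = G.dist a b)
    (hv : v ∈ p.support) (ha : v ≠ a) (hb : v ≠ b)
    (hX : ∀ z ∈ p.support, z ≠ a → z ≠ b → z ≠ v → z ∉ X) :
    ∃ x y, G.Adj v x ∧ G.Adj v y ∧ x ≠ y ∧ ¬ G.Adj x y ∧
      ∀ w ∉ X, G.Adj x w → G.Adj y w → XVisible G X a b := by
  obtain ⟨x, y, q, hxv, hvy, r, rfl⟩ := p.exists_eq_append_cons_cons hv ha hb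
  have hxy : G.dist x y = 2 := by
    simpa using (length_eq_dist_of_subwalk (p₂ := cons hxv (cons hvy nil)) hp
      ⟨q, r, by rw [← append_assoc]; rfl⟩).symm
  obtain ⟨hne, hnadj, -⟩ := dist_eq_two_iff.mp hxy
  have hnodup := (isPath_of_length_eq_dist _ hp).support_nodup
  simp only [support_append, support_cons, List.tail_cons, List.nodup_append,
    List.nodup_cons] at hnodup
  refine ⟨x, y, hxv.symm, hvy, hne, hnadj, fun w hw hxw hyw =>
    ⟨q.append (cons hxw (cons hyw.symm r)), by simpa using hp, ?_⟩⟩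
  intro z hz hza hzb
  simp only [support_append, support_cons, List.tail_cons, List.mem_append,
    List.mem_cons] at hz
  have hmem : z ∈ q.support ∨ z ∈ r.support →
      z ∈ (q.append (cons hxv (cons hvy r))).support := by
    simp only [support_append, support_cons, List.tail_cons, List.mem_append, List.mem_cons]
    tauto
  rcases hz with hz | rfl | hz
  · exact hX z (hmem (.inl hz)) hza hzb (hnodup.2.2 z hz v List.mem_cons_self)
  · exact hw
  · exact hX z (hmem (.inr hz)) hza hzb (fun h => hnodup.2.1.1 (h ▸ hz))

lemma xVisible_iff_of_dist_eq_two {X : Set V} (h : G.dist u v = 2) :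
    XVisible G X u v ↔ ∃ m ∉ X, G.Adj u m ∧ G.Adj m v := by
  constructor
  · rintro ⟨p, hp, hint⟩
    rw [h] at hp
    have hu : G.Adj u (p.getVert 1) := by simpa using p.adj_getVert_succ (i := 0) (by omega)
    have hv : G.Adj (p.getVert 1) v := by
      simpa [← hp] using p.adj_getVert_succ (i := 1) (by omega)
    exact ⟨p.getVert 1, hint _ (p.getVert_mem_support 1) hu.ne' hv.ne, hu, hv⟩
  · rintro ⟨m, hm, hum, hmv⟩
    refine ⟨.cons hum (.cons hmv .nil), by simp [h], fun z hz hzu hzv => ?_⟩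
    simp only [Walk.support_cons, Walk.support_nil, List.mem_cons, List.not_mem_nil] at hz
    grind

lemma not_xVisible_commonNeighbors (h : G.dist u v = 2) :
    ¬ XVisible G (G.commonNeighbors u v) u v := by
  rw [xVisible_iff_of_dist_eq_two h]
  rintro ⟨m, hm, hum, hmv⟩
  exact hm ⟨hum, hmv.symm⟩

lemma TotalVis.subset {X Y : Set V} (hY : TotalVis G Y) (h : X ⊆ Y) : TotalVis G X :=
  fun a b => (hY a b).imp fun _ ⟨hp, hint⟩ =>
    ⟨hp, fun z hz hza hzb hzX => hint z hz hza hzb (h hzX)⟩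

lemma totalVis_singleton_iff (hG : G.Connected) : TotalVis G {v} ↔ Bypass G v := by
  constructor
  · intro hT x hvx y hvy hxy hnadj
    have h2 : G.dist x y = 2 := dist_eq_two_iff.mpr ⟨hxy, hnadj, v, hvx.symm, hvy.symm⟩
    obtain ⟨m, hm, hxm, hmy⟩ := (xVisible_iff_of_dist_eq_two h2).mp (hT x y)
    exact ⟨m, hm, hxm, hmy.symm⟩
  · intro hbv a b
    obtain ⟨p, hp⟩ := hG.exists_walk_length_eq_dist a b
    by_cases hint : v ∈ p.support ∧ v ≠ a ∧ v ≠ b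
    · obtain ⟨x, y, hvx, hvy, hxy, hnadj, hreroute⟩ :=
        p.exists_reroute_xVisible (X := {v}) hp hint.1 hint.2.1 hint.2.2 (fun _ _ _ _ => id)
      obtain ⟨w, hwv, hxw, hyw⟩ := hbv hvx hvy hxy hnadj
      exact hreroute w hwv hxw hyw
    · exact ⟨p, hp, fun z hz hza hzb hzv => hint ⟨hzv ▸ hz, hzv ▸ hza, hzv ▸ hzb⟩⟩

lemma exists_commonNeighbors_eq_pair (hG : G.Connected) {v₁ v₂ : V} (h₁ : Bypass G v₁)
    (h₂ : Bypass G v₂) (hab : ¬ XVisible G {v₁, v₂} a b) :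
    ∃ x y, x ≠ y ∧ ¬ G.Adj x y ∧ G.commonNeighbors x y = {v₁, v₂} := by
  obtain ⟨p, hp, hint⟩ := (totalVis_singleton_iff hG).mpr h₁ a b
  have hv₂ : v₂ ∈ p.support ∧ v₂ ≠ a ∧ v₂ ≠ b := by
    by_contra hv₂
    refine hab ⟨p, hp, fun z hz hza hzb hzX => ?_⟩
    rcases hzX with rfl | rfl
    · exact hint z hz hza hzb rfl
    · exact hv₂ ⟨hz, hza, hzb⟩
  obtain ⟨x, y, hvx, hvy, hxy, hnadj, hreroute⟩ :=
    p.exists_reroute_xVisible (X := {v₁, v₂}) hp hv₂.1 hv₂.2.1 hv₂.2.2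
      (fun z hz hza hzb hzv hzX => hzX.elim (hint z hz hza hzb) hzv)
  have hcommon : G.commonNeighbors x y ⊆ {v₁, v₂} := fun w ⟨hxw, hyw⟩ => by
    by_contra hw
    exact hab (hreroute w hw hxw hyw)
  obtain ⟨w, hwv₂, hxw, hyw⟩ := h₂ hvx hvy hxy hnadj
  have hwv₁ : w = v₁ := (hcommon ⟨hxw, hyw⟩).resolve_right hwv₂
  refine ⟨x, y, hxy, hnadj, hcommon.antisymm ?_⟩
  rintro _ (rfl | rfl)
  · exact hwv₁ ▸ ⟨hxw, hyw⟩
  · exact ⟨hvx.symm, hvy.symm⟩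

end SimpleGraph

theorem stmt_15_general (G : SimpleGraph V) (hG : G.Connected) :
    ((∃ X : Set V, TotalVis G X ∧ X.ncard = 1) ∧
        ∀ X : Set V, TotalVis G X → X.ncard ≤ 1) ↔
      ((∃ v, Bypass G v) ∧
        ∀ v₁ v₂ : V, Bypass G v₁ → Bypass G v₂ → v₁ ≠ v₂ →
          ∃ u₁ u₂ : V, u₁ ≠ u₂ ∧ ¬ G.Adj u₁ u₂ ∧
            G.neighborSet u₁ ∩ G.neighborSet u₂ = {v₁, v₂}) := by
  constructor
  · rintro ⟨⟨X, hX, hX1⟩, hle⟩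
    obtain ⟨v, rfl⟩ := Set.ncard_eq_one.mp hX1
    refine ⟨⟨v, (totalVis_singleton_iff hG).mp hX⟩, fun v₁ v₂ h₁ h₂ h₁₂ => ?_⟩
    have hpair : ¬ TotalVis G {v₁, v₂} := fun h => by
      simpa [Set.ncard_pair h₁₂] using hle _ h
    simp only [TotalVis, not_forall] at hpair
    obtain ⟨a, b, hab⟩ := hpair
    exact exists_commonNeighbors_eq_pair hG h₁ h₂ hab
  · rintro ⟨⟨v, hv⟩, hpair⟩
    refine ⟨⟨{v}, (totalVis_singleton_iff hG).mpr hv, Set.ncard_singleton v⟩, fun X hX => ?_⟩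
    by_contra! hX2
    obtain ⟨v₁, hv₁, v₂, hv₂, h₁₂⟩ := (Set.one_lt_ncard_iff_nontrivial_and_finite.mp hX2).1
    have hbypass {w} (hw : w ∈ X) : Bypass G w :=
      (totalVis_singleton_iff hG).mp (hX.subset (Set.singleton_subset_iff.mpr hw))
    obtain ⟨u₁, u₂, hne, hnadj, hN⟩ :
        ∃ u₁ u₂, u₁ ≠ u₂ ∧ ¬ G.Adj u₁ u₂ ∧ G.commonNeighbors u₁ u₂ = {v₁, v₂} :=
      hpair v₁ v₂ (hbypass hv₁) (hbypass hv₂) h₁₂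
    have hdist : G.dist u₁ u₂ = 2 := dist_eq_two_iff.mpr ⟨hne, hnadj, v₁, hN ▸ Or.inl rfl⟩
    refine not_xVisible_commonNeighbors hdist (hX.subset ?_ u₁ u₂)
    exact hN ▸ Set.insert_subset hv₁ (Set.singleton_subset_iff.mpr hv₂)

theorem stmt_15 [Fintype V] (G : SimpleGraph V) (hG : G.Connected) :
    ((∃ X : Set V, TotalVis G X ∧ X.ncard = 1) ∧
        ∀ X : Set V, TotalVis G X → X.ncard ≤ 1) ↔
      ((∃ v, Bypass G v) ∧
        ∀ v₁ v₂ : V, Bypass G v₁ → Bypass G v₂ → v₁ ≠ v₂ →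
          ∃ u₁ u₂ : V, u₁ ≠ u₂ ∧ ¬ G.Adj u₁ u₂ ∧
            G.neighborSet u₁ ∩ G.neighborSet u₂ = {v₁, v₂}) :=
  stmt_15_general G hG
end

section
/- For n ≥ 7, the only dual mutual-visibility set of the cycle C_n is the empty set, i.e., μ_d(C_n) = 0. -/
open SimpleGraph

variable {V : Type*}

/-!
On a cycle of length `n > 2k`, the unique shortest path from `u` to `u + k` is
`u, u + 1, …, u + k`: lifting a walk to `ℤ`, its displacement `d` satisfies `|d| ≤ k` and
`d ≡ k (mod n)`, so `d = k`. Hence if `u` and `u + k` are `X`-visible, none of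
`u + 1, …, u + k - 1` lies in `X`.

Let `X` be dual mutual-visibility and `x ∈ X`. If also `x + 1 ∈ X`, then visibility of the pairs
`x, x + 2` and `x - 1, x + 1` inside `X` forces `x + 2, x - 1 ∉ X`, but then `x - 1, x + 2`
are not `X`-visible because of `x` (this needs `n > 6`). So no two neighbours lie in `X`, and then
`x - 1, x + 1 ∉ X` are not `X`-visible because of `x`.
-/

theorem dualVis_empty_of_preconnected {G : SimpleGraph V} (hG : G.Preconnected) :
    DualVis G ∅ := by
  refine ⟨fun u hu => absurd hu (Set.notMem_empty u), fun u _ v _ => ?_⟩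
  obtain ⟨p, hp⟩ := (hG u v).exists_walk_length_eq_dist
  exact ⟨p, hp, fun w _ _ _ => Set.notMem_empty w⟩

section Cycle

variable {n : ℕ}

theorem cyc_adj_add_one (hn : 1 < n) (u : ZMod n) : (cyc n).Adj u (u + 1) := by
  have : Fact (1 < n) := ⟨hn⟩
  exact (fromRel_adj _ _ _).mpr
    ⟨fun h => one_ne_zero (α := ZMod n) (by linear_combination -h), Or.inr (by ring)⟩

theorem exists_int_eq_add_of_cyc_adj {u w : ZMod n} (h : (cyc n).Adj u w) :
    ∃ e : ℤ, (e = 1 ∨ e = -1) ∧ w = u + e := by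
  rcases ((fromRel_adj _ _ _).mp h).2 with h | h
  · exact ⟨-1, Or.inr rfl, by push_cast; linear_combination -h⟩
  · exact ⟨1, Or.inl rfl, by push_cast; linear_combination h⟩

theorem cyc_exists_walk_add (hn : 1 < n) (u : ZMod n) :
    ∀ k : ℕ, ∃ p : (cyc n).Walk u (u + k), p.length = k
  | 0 => ⟨Walk.nil.copy rfl (by simp), by simp⟩
  | k + 1 => by
    obtain ⟨p, hp⟩ := cyc_exists_walk_add hn u k
    refine ⟨(p.concat (cyc_adj_add_one hn _)).copy rfl (by push_cast; ring), ?_⟩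
    simp [hp]

theorem cyc_connected (hn : 1 < n) : (cyc n).Connected := by
  have : NeZero n := ⟨by omega⟩
  refine Connected.mk fun u v => ?_
  obtain ⟨p, -⟩ := cyc_exists_walk_add hn u (v - u).val
  rw [ZMod.natCast_zmod_val, add_sub_cancel] at p
  exact p.reachable

theorem SimpleGraph.Walk.cyc_exists_lift {u v : ZMod n} (p : (cyc n).Walk u v) :
    ∃ d : ℤ, |d| ≤ p.length ∧ v = u + d ∧
      ∀ j : ℤ, min 0 d ≤ j → j ≤ max 0 d → u + j ∈ p.support := by
  induction p with
  | nil => exact ⟨0, by simp, by simp, fun j h0 h1 => by simp [show j = 0 by omega]⟩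
  | @cons u w v h q ih =>
    obtain ⟨e, he, hw⟩ := exists_int_eq_add_of_cyc_adj h
    obtain ⟨d, hd, hv, hq⟩ := ih
    refine ⟨e + d, ?_, by rw [hv, hw]; push_cast; ring, fun j h0 h1 => ?_⟩
    · have he1 : |e| = 1 := by rcases he with rfl | rfl <;> simp
      rw [Walk.length_cons]; push_cast
      linarith [abs_add_le e d]
    · rw [Walk.support_cons, List.mem_cons]
      rcases (show j = 0 ∨ (min 0 d ≤ j - e ∧ j - e ≤ max 0 d) by omega) with rfl | ⟨h0', h1'⟩
      · simp
      · refine Or.inr ?_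
        convert hq (j - e) h0' h1' using 1
        rw [hw]; push_cast; ring

theorem SimpleGraph.Walk.cyc_add_mem_support {k : ℕ} (hk : 2 * k < n) {u : ZMod n}
    (p : (cyc n).Walk u (u + k)) (hp : p.length ≤ k) {j : ℕ} (hj : j ≤ k) :
    u + j ∈ p.support := by
  obtain ⟨d, hd, hv, hsupp⟩ := p.cyc_exists_lift
  have hdk : d = k := by
    have hdvd : (n : ℤ) ∣ d - k := by
      rw [← ZMod.intCast_eq_intCast_iff_dvd_sub]
      simpa using hv
    obtain ⟨hd₁, hd₂⟩ := abs_le.mp (hd.trans (Int.ofNat_le.mpr hp) : |d| ≤ k)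
    have := Int.eq_zero_of_abs_lt_dvd hdvd (abs_lt.mpr ⟨by omega, by omega⟩)
    omega
  simpa using hsupp j (by omega) (by omega)

theorem XVisible.cyc_add_notMem {X : Set (ZMod n)} {u v : ZMod n} {k : ℕ} (hk : 2 * k < n)
    (hv : v = u + k) (hvis : XVisible (cyc n) X u v) {j : ℕ} (hj : 0 < j) (hjk : j < k) :
    u + j ∉ X := by
  subst hv
  obtain ⟨p, hp, hint⟩ := hvis
  have hdist : (cyc n).dist u (u + k) ≤ k := by
    obtain ⟨q, hq⟩ := cyc_exists_walk_add (by omega) u k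
    exact (dist_le q).trans hq.le
  have hinj : ∀ i < n, u + (j : ZMod n) = u + i → j = i := fun i hi h => by
    rwa [add_left_cancel_iff, ZMod.natCast_eq_natCast_iff', Nat.mod_eq_of_lt (by omega),
      Nat.mod_eq_of_lt hi] at h
  refine hint _ (p.cyc_add_mem_support hk (hp ▸ hdist) hjk.le) (fun h => ?_) (fun h => ?_)
  · exact absurd (hinj 0 (by omega) (by simpa using h)) (by omega)
  · exact absurd (hinj k (by omega) h) (by omega)

theorem DualVis.cyc_add_one_notMem (hn : 7 ≤ n) {X : Set (ZMod n)} (hX : DualVis (cyc n) X)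
    {x : ZMod n} (hx : x ∈ X) : x + 1 ∉ X := by
  intro hx1
  have hx2 : x + 2 ∉ X := fun hx2 =>
    (hX.1 hx hx2).cyc_add_notMem (k := 2) (j := 1) (by omega) (by simp) (by omega) (by omega)
      (by simpa using hx1)
  have hxm1 : x - 1 ∉ X := fun hxm1 =>
    (hX.1 hxm1 hx1).cyc_add_notMem (k := 2) (j := 1) (by omega) (by push_cast; ring) (by omega)
      (by omega) (by simpa using hx)
  exact (hX.2 hxm1 hx2).cyc_add_notMem (k := 3) (j := 1) (by omega) (by push_cast; ring)
    (by omega) (by omega) (by simpa using hx)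

end Cycle

theorem stmt_19 (n : ℕ) (hn : 7 ≤ n) (X : Set (ZMod n)) :
    DualVis (cyc n) X ↔ X = ∅ := by
  constructor
  · intro hX
    refine Set.eq_empty_iff_forall_notMem.mpr fun x hx => ?_
    have hx1 : x + 1 ∉ X := hX.cyc_add_one_notMem hn hx
    have hxm1 : x - 1 ∉ X := fun h => hX.cyc_add_one_notMem hn h (by simpa using hx)
    exact (hX.2 hxm1 hx1).cyc_add_notMem (k := 2) (j := 1) (by omega) (by push_cast; ring)
      (by omega) (by omega) (by simpa using hx)
  · rintro rfl
    exact dualVis_empty_of_preconnected (cyc_connected (by omega)).preconnected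
end
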